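/- arXiv:1910.05542 — 5 statements merged into one kernel-verified Lean document; each statement's English description precedes it below -/
import Mathlib

section
/- Let $D$ be a bipartite digraph with partite sets $V_1$ and $V_2$, and let $C_i$ and $C_j$ be two vertex-disjoint directed cycles in $D$. If $C_i$ and $C_j$ cannot be merged into a single directed cycle with vertex set $V(C_i) \cup V(C_j)$, then the number of arcs between $V(C_i)$ and $V(C_j)$ (in both directions) is at most $\frac{|V(C_i)| \cdot |V(C_j)|}{2}$. -/
open Finset

variable {V : Type*}

/-- Cyclic successor of `x` on the cycle represented by list `c`. -/
def cycNext [DecidableEq V] (c : List V) (x : V) : V :=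
  c.getD ((c.idxOf x + 1) % c.length) x

/-- `c` is a directed cycle of the digraph with arc relation `A`. -/
def IsDicycle [DecidableEq V] (A : V → V → Prop) (c : List V) : Prop :=
  2 ≤ c.length ∧ c.Nodup ∧ ∀ x ∈ c, A x (cycNext c x)

/-- The digraph has a hamiltonian (directed) cycle. -/
def IsHamiltonian [DecidableEq V] (A : V → V → Prop) : Prop :=
  ∃ c : List V, IsDicycle A c ∧ ∀ v, v ∈ c

/-- `p` is a hamiltonian directed path. -/
def IsHamDipath (A : V → V → Prop) (p : List V) : Prop :=
  p.Nodup ∧ p.Chain' A ∧ ∀ v, v ∈ p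

/-- The digraph has a hamiltonian directed path. -/
def IsTraceable (A : V → V → Prop) : Prop := ∃ p, IsHamDipath A p

/-- The digraph has a cycle factor: vertex-disjoint dicycles covering all vertices. -/
def HasCycleFactor [DecidableEq V] (A : V → V → Prop) : Prop :=
  ∃ L : List (List V), (∀ c ∈ L, IsDicycle A c) ∧
    L.Pairwise (fun c d => ∀ x ∈ c, x ∉ d) ∧ ∀ v, ∃ c ∈ L, v ∈ c

/-- `V₁, V₂` form a bipartition of the digraph into independent sets. -/
def IsBipartition [DecidableEq V] [Fintype V] (A : V → V → Prop) (V₁ V₂ : Finset V) : Prop :=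
  Disjoint V₁ V₂ ∧ V₁ ∪ V₂ = Finset.univ ∧
    (∀ x ∈ V₁, ∀ y ∈ V₁, ¬ A x y) ∧ (∀ x ∈ V₂, ∀ y ∈ V₂, ¬ A x y)

/-- total degree (out-degree plus in-degree) of `v`. -/
def deg [Fintype V] (A : V → V → Prop) [DecidableRel A] (v : V) : ℕ :=
  (Finset.univ.filter (fun y => A v y)).card + (Finset.univ.filter (fun y => A y v)).card

/-- number of arcs (in both directions) between `v` and the set `X`. -/
def degIn (A : V → V → Prop) [DecidableRel A] (X : Finset V) (v : V) : ℕ :=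
  (X.filter (fun y => A v y)).card + (X.filter (fun y => A y v)).card

/-- total number of arcs between `X` and `Y`, in both directions. -/
def arcsBetween (A : V → V → Prop) [DecidableRel A] (X Y : Finset V) : ℕ :=
  ((X ×ˢ Y).filter (fun p => A p.1 p.2)).card + ((Y ×ˢ X).filter (fun p => A p.1 p.2)).card

/-- strong connectivity. -/
def IsStrong (A : V → V → Prop) : Prop := ∀ u v, Relation.ReflTransGen A u v

/-- `N⁺(S)`: out-neighbourhood of a set. -/
def outNbrs [Fintype V] [DecidableEq V] (A : V → V → Prop) [DecidableRel A]
    (S : Finset V) : Finset V :=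
  Finset.univ.filter (fun y => ∃ v ∈ S, A v y)

/-- a perfect matching from `X` to `Y` using arcs of the digraph. -/
def HasPerfectMatching (A : V → V → Prop) (X Y : Finset V) : Prop :=
  ∃ f : V → V, Set.InjOn f X ∧ ∀ x ∈ X, f x ∈ Y ∧ A x (f x)

/-- a matching from `V₁` to `V₂`: a set of pairwise independent arcs. -/
def IsMatching (A : V → V → Prop) (V₁ V₂ : Finset V) (M : Finset (V × V)) : Prop :=
  (∀ p ∈ M, p.1 ∈ V₁ ∧ p.2 ∈ V₂ ∧ A p.1 p.2) ∧
  (∀ p ∈ M, ∀ q ∈ M, p ≠ q → p.1 ≠ q.1 ∧ p.2 ≠ q.2)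

/-- the digraph (with arc relation `A`) is a member of the family `𝓗₁`,
with partite sets `S ∪ R` and `U ∪ W`. -/
def IsH1 [DecidableEq V] [Fintype V] (A : V → V → Prop) [DecidableRel A] (a : ℕ)
    (S R U W : Finset V) : Prop :=
  Odd a ∧ 3 ≤ a ∧
  Disjoint S R ∧ Disjoint U W ∧ Disjoint (S ∪ R) (U ∪ W) ∧
  S ∪ R ∪ U ∪ W = Finset.univ ∧
  S.card = (a + 1) / 2 ∧ W.card = (a + 1) / 2 ∧
  U.card = (a - 1) / 2 ∧ R.card = (a - 1) / 2 ∧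
  (∀ x ∈ S ∪ R, ∀ y ∈ S ∪ R, ¬ A x y) ∧
  (∀ x ∈ U ∪ W, ∀ y ∈ U ∪ W, ¬ A x y) ∧
  (∀ r ∈ R, ∀ w ∈ W, A r w ∧ A w r) ∧
  (∀ u ∈ U, ∀ s ∈ S, A u s ∧ A s u) ∧
  (∀ w ∈ W, ∀ s ∈ S, A w s) ∧
  (∀ s ∈ S, ∀ w ∈ W, ¬ A s w) ∧
  (∃ u ∈ U, ∃ r ∈ R, A u r) ∧
  (∀ r ∈ R, (a - 3) / 2 ≤ degIn A U r) ∧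
  (∀ u ∈ U, (a - 3) / 2 ≤ degIn A R u)

/-- the digraph (with arc relation `A`) is the digraph `H₃`,
with partite sets `S ∪ R` and `U ∪ W`. -/
def IsH3 [DecidableEq V] [Fintype V] (A : V → V → Prop) [DecidableRel A] (a : ℕ)
    (S R U W : Finset V) : Prop :=
  Even a ∧ 4 ≤ a ∧
  Disjoint S R ∧ Disjoint U W ∧ Disjoint (S ∪ R) (U ∪ W) ∧
  S ∪ R ∪ U ∪ W = Finset.univ ∧
  S.card = (a + 2) / 2 ∧ W.card = (a + 2) / 2 ∧
  U.card = (a - 2) / 2 ∧ R.card = (a - 2) / 2 ∧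
  (∀ x ∈ S ∪ R, ∀ y ∈ S ∪ R, ¬ A x y) ∧
  (∀ x ∈ U ∪ W, ∀ y ∈ U ∪ W, ¬ A x y) ∧
  (∀ r ∈ R, ∀ y ∈ U ∪ W, A r y ∧ A y r) ∧
  (∀ u ∈ U, ∀ x ∈ S ∪ R, A u x ∧ A x u) ∧
  (∀ w ∈ W, ∀ s ∈ S, A w s) ∧
  (∀ s ∈ S, ∀ w ∈ W, ¬ A s w)

/-- the digraph `H₂` on vertices `Fin 6`, where
`x₁ = 0, x₂ = 1, x₃ = 2, y₁ = 3, y₂ = 4, y₃ = 5`. -/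
def H2Adj : Fin 6 → Fin 6 → Prop := fun u v =>
  (u, v) ∈ ([(0,4),(4,2),(2,5),(5,0),(1,4),(4,1),(1,5),(5,1),(3,0),(0,3),(3,2),(2,3)] :
    List (Fin 6 × Fin 6))

instance : DecidableRel H2Adj := fun u v => by unfold H2Adj; infer_instance

/-!
Record an arc `u → v` from `C₁` to `C₂` as the pair `(u, v⁻)` and an arc `w → v` from `C₂` to
`C₁` as the pair `(v⁻, w)`, where `⁻` is the predecessor on the cycle. Both recordings are
injective, and no pair `(u, w)` is recorded twice: arcs `u → w⁺` and `w → u⁺` would replace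
`u → u⁺` and `w → w⁺` and merge the two cycles. In a recorded pair `u` and `w` lie on the same
side of the bipartition, and since each cycle alternates between the sides there are exactly
`|C₁| |C₂| / 2` such pairs.
-/

section Dicycle

variable [DecidableEq V] {A : V → V → Prop} {c : List V}

theorem cycNext_eq_formPerm (hc : c.Nodup) {x : V} (hx : x ∈ c) :
    cycNext c x = c.formPerm x := by
  obtain ⟨i, hi, rfl⟩ := List.mem_iff_getElem.1 hx
  rw [cycNext, hc.idxOf_getElem i hi, List.getD_eq_getElem, List.formPerm_apply_getElem _ hc]

theorem cycle_chain_iff_forall_formPerm (hc : c.Nodup) :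
    Cycle.Chain A (c : Cycle V) ↔ ∀ x ∈ c, A x (c.formPerm x) := by
  rcases c with _ | ⟨a, t⟩
  · simp
  set l := a :: t
  have hn : 0 < l.length := by simp [l]
  have hnext : ∀ i (hi : i < l.length),
      (l ++ [a])[i + 1]'(by simp; omega) = l[(i + 1) % l.length]'(Nat.mod_lt _ hn) := by
    intro i hi
    rcases Nat.lt_or_ge (i + 1) l.length with h | h
    · simp [List.getElem_append_left h, Nat.mod_eq_of_lt h]
    · have : i + 1 = l.length := by omega
      simp [this, l]
  rw [Cycle.chain_coe_cons, ← List.cons_append, List.isChain_iff_getElem,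
    List.forall_mem_iff_getElem]
  simp only [List.formPerm_apply_getElem _ hc, List.length_append, List.length_singleton,
    Nat.add_lt_add_iff_right]
  refine forall₂_congr fun i hi => ?_
  rw [hnext i hi, List.getElem_append_left hi]

theorem isDicycle_iff_chain :
    IsDicycle A c ↔ 2 ≤ c.length ∧ c.Nodup ∧ Cycle.Chain A (c : Cycle V) := by
  refine and_congr_right fun _ => and_congr_right fun hc => ?_
  rw [cycle_chain_iff_forall_formPerm hc]
  exact forall₂_congr fun x hx => by rw [cycNext_eq_formPerm hc hx]

theorem IsDicycle.isRotated (h : IsDicycle A c) {c' : List V} (hr : c ~r c') :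
    IsDicycle A c' := by
  obtain ⟨hlen, hc, hch⟩ := isDicycle_iff_chain.1 h
  exact isDicycle_iff_chain.2
    ⟨hr.perm.length_eq ▸ hlen, hr.nodup_iff.1 hc, Cycle.coe_eq_coe.2 hr ▸ hch⟩

theorem IsDicycle.exists_isRotated_cycNext_cons (h : IsDicycle A c) {x : V} (hx : x ∈ c) :
    ∃ s, c ~r cycNext c x :: (s ++ [x]) := by
  obtain ⟨p, t, rfl⟩ := List.append_of_mem hx
  have hr : p ++ x :: t ~r t ++ p ++ [x] := by
    simpa using List.isRotated_append (l := p ++ [x]) (l' := t)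
  obtain ⟨y, s, hys⟩ := List.exists_cons_of_ne_nil (l := t ++ p) <| List.ne_nil_of_length_pos <| by
    have := h.1
    simp only [List.length_append, List.length_cons] at this ⊢
    omega
  refine ⟨s, ?_⟩
  rw [cycNext_eq_formPerm h.2.1 hx, List.formPerm_eq_of_isRotated h.2.1 hr, hys]
  simpa [hys] using hr

theorem IsDicycle.exists_merge {c₁ c₂ : List V} (h₁ : IsDicycle A c₁) (h₂ : IsDicycle A c₂)
    (hdisj : ∀ x ∈ c₁, x ∉ c₂) {u w : V} (hu : u ∈ c₁) (hw : w ∈ c₂)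
    (huw : A u (cycNext c₂ w)) (hwu : A w (cycNext c₁ u)) :
    ∃ c, IsDicycle A c ∧ ∀ v, v ∈ c ↔ v ∈ c₁ ∨ v ∈ c₂ := by
  obtain ⟨s₁, hr₁⟩ := h₁.exists_isRotated_cycNext_cons hu
  obtain ⟨s₂, hr₂⟩ := h₂.exists_isRotated_cycNext_cons hw
  obtain ⟨-, hnd₁, hch₁⟩ := isDicycle_iff_chain.1 (h₁.isRotated hr₁)
  obtain ⟨-, hnd₂, hch₂⟩ := isDicycle_iff_chain.1 (h₂.isRotated hr₂)
  refine ⟨cycNext c₁ u :: (s₁ ++ [u]) ++ cycNext c₂ w :: (s₂ ++ [w]),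
    isDicycle_iff_chain.2 ⟨?_, ?_, ?_⟩, fun v => by rw [List.mem_append, hr₁.mem_iff, hr₂.mem_iff]⟩
  · simp only [List.length_append, List.length_cons]
    omega
  · exact List.nodup_append.2 ⟨hnd₁, hnd₂, fun a ha b hb hab =>
      hdisj a (hr₁.mem_iff.2 ha) (hab ▸ hr₂.mem_iff.2 hb)⟩
  · simp only [Cycle.chain_coe_cons, List.cons_append, List.append_assoc, List.nil_append,
      List.isChain_cons_append_cons_cons, List.IsChain.singleton, and_true] at hch₁ hch₂ ⊢
    exact ⟨hch₁.1, huw, hch₂.1, hwu⟩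

end Dicycle

theorem two_mul_card_filter_iff {α β : Type*} {X : Finset α} {Y : Finset β}
    {p : α → Prop} {r : β → Prop} [DecidablePred p] [DecidablePred r]
    (hX : 2 * #{x ∈ X | p x} = #X) (hY : 2 * #{y ∈ Y | r y} = #Y) :
    2 * #{q ∈ X ×ˢ Y | p q.1 ↔ r q.2} = #X * #Y := by
  have hdisj : Disjoint ({x ∈ X | p x} ×ˢ {y ∈ Y | r y}) ({x ∈ X | ¬p x} ×ˢ {y ∈ Y | ¬r y}) :=
    disjoint_product.2 (Or.inl (disjoint_filter_filter_not X X p))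
  have hsplit : {q ∈ X ×ˢ Y | p q.1 ↔ r q.2} =
      ({x ∈ X | p x} ×ˢ {y ∈ Y | r y}).disjUnion ({x ∈ X | ¬p x} ×ˢ {y ∈ Y | ¬r y}) hdisj := by
    ext ⟨x, y⟩
    simp only [mem_filter, mem_product, mem_disjUnion]
    tauto
  have hX' : #{x ∈ X | ¬p x} = #{x ∈ X | p x} := by
    have := card_filter_add_card_filter_not (s := X) (fun x => p x)
    omega
  have hY' : #{y ∈ Y | ¬r y} = #{y ∈ Y | r y} := by
    have := card_filter_add_card_filter_not (s := Y) (fun y => r y)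
    omega
  rw [hsplit, card_disjUnion, card_product, card_product, hX', hY', ← hX, ← hY]
  ring

section Counting

variable [DecidableEq V] {A : V → V → Prop} [DecidableRel A] {c : List V}

theorem card_filter_adj_cycNext_right (hc : c.Nodup) (X : Finset V) :
    #{q ∈ X ×ˢ c.toFinset | A q.1 (cycNext c q.2)} = #{q ∈ X ×ˢ c.toFinset | A q.1 q.2} := by
  refine card_equiv ((Equiv.refl V).prodCongr c.formPerm) fun ⟨x, y⟩ => ?_
  simp only [mem_filter, mem_product, List.mem_toFinset, Equiv.prodCongr_apply, Equiv.coe_refl,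
    Prod.map, id, List.formPerm_mem_iff_mem, and_assoc]
  exact and_congr_right fun _ => and_congr_right fun hy => by rw [cycNext_eq_formPerm hc hy]

theorem card_filter_adj_cycNext_left (hc : c.Nodup) (Y : Finset V) :
    #{q ∈ c.toFinset ×ˢ Y | A q.2 (cycNext c q.1)} = #{q ∈ Y ×ˢ c.toFinset | A q.1 q.2} := by
  refine card_equiv ((Equiv.prodComm V V).trans ((Equiv.refl V).prodCongr c.formPerm))
    fun ⟨x, y⟩ => ?_
  simp only [mem_filter, mem_product, List.mem_toFinset, Equiv.trans_apply, Equiv.prodComm_apply,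
    Prod.swap, Equiv.prodCongr_apply, Equiv.coe_refl, Prod.map, id, List.formPerm_mem_iff_mem]
  constructor
  · rintro ⟨⟨hx, hy⟩, hA⟩
    exact ⟨⟨hy, hx⟩, cycNext_eq_formPerm hc hx ▸ hA⟩
  · rintro ⟨⟨hy, hx⟩, hA⟩
    exact ⟨⟨hx, hy⟩, (cycNext_eq_formPerm hc hx).symm ▸ hA⟩

end Counting

section Bipartite

variable [DecidableEq V] [Fintype V] {A : V → V → Prop} {V₁ V₂ : Finset V}

theorem IsBipartition.mem_iff_notMem_of_adj (hbip : IsBipartition A V₁ V₂) {x y : V}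
    (hxy : A x y) : x ∈ V₁ ↔ y ∉ V₁ := by
  have hV₂ : ∀ z, z ∉ V₁ → z ∈ V₂ := fun z hz =>
    (mem_union.1 (hbip.2.1 ▸ mem_univ z)).resolve_left hz
  refine ⟨fun hx hy => hbip.2.2.1 x hx y hy hxy, fun hy => ?_⟩
  by_contra hx
  exact hbip.2.2.2 x (hV₂ x hx) y (hV₂ y hy) hxy

theorem IsBipartition.mem_iff_of_adj_of_adj (hbip : IsBipartition A V₁ V₂) {x y z : V}
    (hxz : A x z) (hyz : A y z) : x ∈ V₁ ↔ y ∈ V₁ := by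
  rw [hbip.mem_iff_notMem_of_adj hxz, hbip.mem_iff_notMem_of_adj hyz]

theorem IsDicycle.two_mul_card_filter_mem (hbip : IsBipartition A V₁ V₂) {c : List V}
    (h : IsDicycle A c) : 2 * #{x ∈ c.toFinset | x ∈ V₁} = #c.toFinset := by
  have hhalf : #{x ∈ c.toFinset | x ∈ V₁} = #{x ∈ c.toFinset | x ∉ V₁} :=
    card_equiv c.formPerm fun x => by
      simp only [mem_filter, List.mem_toFinset, List.formPerm_mem_iff_mem]
      exact and_congr_right fun hx =>
        hbip.mem_iff_notMem_of_adj (cycNext_eq_formPerm h.2.1 hx ▸ h.2.2 x hx)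
  have := card_filter_add_card_filter_not (s := c.toFinset) (· ∈ V₁)
  omega

end Bipartite

theorem stmt3 {V : Type*} [DecidableEq V] [Fintype V] (A : V → V → Prop) [DecidableRel A]
    (V₁ V₂ : Finset V) (hbip : IsBipartition A V₁ V₂)
    (c₁ c₂ : List V) (h₁ : IsDicycle A c₁) (h₂ : IsDicycle A c₂)
    (hdisj : ∀ x ∈ c₁, x ∉ c₂)
    (hnomerge : ¬ ∃ c : List V, IsDicycle A c ∧ ∀ v, v ∈ c ↔ v ∈ c₁ ∨ v ∈ c₂) :
    2 * arcsBetween A c₁.toFinset c₂.toFinset ≤ c₁.length * c₂.length := by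
  set X := c₁.toFinset
  set Y := c₂.toFinset
  set T₁ := {q ∈ X ×ˢ Y | A q.1 (cycNext c₂ q.2)}
  set T₂ := {q ∈ X ×ˢ Y | A q.2 (cycNext c₁ q.1)}
  have hT : Disjoint T₁ T₂ := disjoint_left.2 fun q hq₁ hq₂ => by
    simp only [T₁, T₂, X, Y, mem_filter, mem_product, List.mem_toFinset] at hq₁ hq₂
    exact hnomerge (h₁.exists_merge h₂ hdisj hq₁.1.1 hq₁.1.2 hq₁.2 hq₂.2)
  have hsub : T₁ ∪ T₂ ⊆ {q ∈ X ×ˢ Y | q.1 ∈ V₁ ↔ q.2 ∈ V₁} := fun q hq => by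
    simp only [T₁, T₂, X, Y, mem_union, mem_filter, mem_product, List.mem_toFinset] at hq ⊢
    rcases hq with ⟨⟨hu, hw⟩, hA⟩ | ⟨⟨hu, hw⟩, hA⟩
    · exact ⟨⟨hu, hw⟩, hbip.mem_iff_of_adj_of_adj hA (h₂.2.2 _ hw)⟩
    · exact ⟨⟨hu, hw⟩, hbip.mem_iff_of_adj_of_adj (h₁.2.2 _ hu) hA⟩
  calc 2 * arcsBetween A X Y = 2 * #(T₁ ∪ T₂) := by
        rw [arcsBetween, card_union_of_disjoint hT, card_filter_adj_cycNext_right h₂.2.1,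
          card_filter_adj_cycNext_left h₁.2.1]
    _ ≤ 2 * #{q ∈ X ×ˢ Y | q.1 ∈ V₁ ↔ q.2 ∈ V₁} := by gcongr
    _ = #X * #Y := two_mul_card_filter_iff (h₁.two_mul_card_filter_mem hbip)
        (h₂.two_mul_card_filter_mem hbip)
    _ = c₁.length * c₂.length := by
        rw [List.toFinset_card_of_nodup h₁.2.1, List.toFinset_card_of_nodup h₂.2.1]
end

section
/- Let $D$ be a strong balanced bipartite digraph of order $2a$ with partite sets $V_1, V_2$, where $a \ge 2$. Suppose $d(u) + d(v) \ge 3a - 1$ for all pairs of non-adjacent vertices $u, v$. If there is a nonempty set $S \subseteq V_1$ with $|N^+(S)| < |S|$, then $a$ is odd, $|S| = \frac{a+1}{2}$, and $|N^+(S)| = \frac{a-1}{2}$. -/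
open Finset

variable {V : Type*}

/-!
Let `T = N⁺(S) ⊆ V₂`. A vertex of `S` has degree at most `|T| + a`, and a vertex of `V₂ \ T`
has degree at most `a + (a - |S|)`, since its in-neighbours lie in `V₁ \ S`. Strong connectivity
makes `T` nonempty, so `|S| ≥ 2`, and the degree condition on two vertices of `S` gives
`2|T| ≥ a - 1`. If `|V₂ \ T| ≥ 2`, the same on two vertices of `V₂ \ T` gives `2|S| ≤ a + 1`,
which together with `|T| < |S|` pins down `a = 2|T| + 1` and `|S| = |T| + 1`. Otherwise
`|S| = a`, so `S = V₁`, and in a strong bipartite digraph `N⁺(V₁) = V₂`, contradicting `|T| < |S|`.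
-/

namespace IsStrong

variable {A : V → V → Prop}

theorem exists_arc_leaving (hA : IsStrong A) {P : V → Prop} {u v : V} (hu : P u) (hv : ¬ P v) :
    ∃ x y, P x ∧ ¬ P y ∧ A x y := by
  by_contra! hclosed
  have hreach : ∀ w, Relation.ReflTransGen A u w → P w := fun w huw => by
    induction huw with
    | refl => exact hu
    | tail _ hbc ih => exact by_contra fun hc => hclosed _ _ ih hc hbc
  exact hv (hreach v (hA u v))

theorem exists_adj_of_ne (hA : IsStrong A) {u v : V} (huv : u ≠ v) : ∃ y, A u y := by
  obtain ⟨x, y, rfl, -, hxy⟩ := hA.exists_arc_leaving (P := (· = u)) rfl huv.symm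
  exact ⟨y, hxy⟩

theorem exists_adj_to_of_ne (hA : IsStrong A) {u v : V} (huv : u ≠ v) : ∃ x, A x v := by
  obtain ⟨x, y, -, hy, hxy⟩ := hA.exists_arc_leaving (P := (· ≠ v)) huv (not_not.2 rfl)
  exact ⟨x, not_not.1 hy ▸ hxy⟩

end IsStrong

section

variable [Fintype V] {A : V → V → Prop} [DecidableRel A]

theorem deg_le_card_add_card {v : V} {X Y : Finset V} (hout : ∀ y, A v y → y ∈ X)
    (hin : ∀ y, A y v → y ∈ Y) : deg A v ≤ X.card + Y.card :=
  add_le_add (card_le_card fun y hy => hout y (mem_filter.1 hy).2)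
    (card_le_card fun y hy => hin y (mem_filter.1 hy).2)

theorem le_two_mul_of_one_lt_card {n b : ℕ} {X : Finset V}
    (hdeg : ∀ u v, u ≠ v → ¬ A u v → ¬ A v u → n ≤ deg A u + deg A v)
    (hX : ∀ x ∈ X, ∀ y ∈ X, ¬ A x y) (hcard : 1 < X.card) (hb : ∀ x ∈ X, deg A x ≤ b) :
    n ≤ 2 * b := by
  obtain ⟨u, hu, v, hv, huv⟩ := one_lt_card.1 hcard
  have := hdeg u v huv (hX u hu v hv) (hX v hv u hu)
  linarith [hb u hu, hb v hv]

variable [DecidableEq V]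

@[simp]
theorem mem_outNbrs {S : Finset V} {y : V} : y ∈ outNbrs A S ↔ ∃ v ∈ S, A v y := by
  simp [outNbrs]

end

namespace IsBipartition

variable [Fintype V] [DecidableEq V] {A : V → V → Prop} {V₁ V₂ : Finset V}

theorem symm (hb : IsBipartition A V₁ V₂) : IsBipartition A V₂ V₁ :=
  ⟨hb.1.symm, union_comm V₁ V₂ ▸ hb.2.1, hb.2.2.2, hb.2.2.1⟩

theorem head_mem_right (hb : IsBipartition A V₁ V₂) {x y : V} (hx : x ∈ V₁) (hxy : A x y) :
    y ∈ V₂ := by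
  have hy : y ∈ V₁ ∪ V₂ := hb.2.1 ▸ mem_univ y
  exact (mem_union.1 hy).resolve_left fun hy₁ => hb.2.2.1 x hx y hy₁ hxy

theorem tail_mem_right (hb : IsBipartition A V₁ V₂) {x y : V} (hx : x ∈ V₁) (hyx : A y x) :
    y ∈ V₂ := by
  have hy : y ∈ V₁ ∪ V₂ := hb.2.1 ▸ mem_univ y
  exact (mem_union.1 hy).resolve_left fun hy₁ => hb.2.2.1 y hy₁ x hx hyx

variable [DecidableRel A]

theorem outNbrs_subset_right (hb : IsBipartition A V₁ V₂) {S : Finset V} (hS : S ⊆ V₁) :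
    outNbrs A S ⊆ V₂ := fun y hy => by
  obtain ⟨v, hv, hvy⟩ := mem_outNbrs.1 hy
  exact hb.head_mem_right (hS hv) hvy

theorem outNbrs_left_eq (hb : IsBipartition A V₁ V₂) (hA : IsStrong A) {u : V} (hu : u ∈ V₁) :
    outNbrs A V₁ = V₂ := by
  refine (hb.outNbrs_subset_right subset_rfl).antisymm fun w hw => ?_
  have huw : u ≠ w := fun h => disjoint_left.1 hb.1 hu (h ▸ hw)
  obtain ⟨x, hxw⟩ := hA.exists_adj_to_of_ne huw
  exact mem_outNbrs.2 ⟨x, hb.symm.tail_mem_right hw hxw, hxw⟩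

theorem deg_le_of_mem (hb : IsBipartition A V₁ V₂) {S : Finset V} (hS : S ⊆ V₁) {u : V}
    (hu : u ∈ S) : deg A u ≤ (outNbrs A S).card + V₂.card :=
  deg_le_card_add_card (fun _ huy => mem_outNbrs.2 ⟨u, hu, huy⟩)
    (fun _ hyu => hb.tail_mem_right (hS hu) hyu)

theorem deg_le_of_notMem_outNbrs (hb : IsBipartition A V₁ V₂) {S : Finset V} {w : V}
    (hw : w ∈ V₂) (hwS : w ∉ outNbrs A S) : deg A w ≤ V₁.card + (V₁ \ S).card :=
  deg_le_card_add_card (fun _ hwy => hb.symm.head_mem_right hw hwy)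
    (fun y hyw => mem_sdiff.2 ⟨hb.symm.tail_mem_right hw hyw,
      fun hy => hwS (mem_outNbrs.2 ⟨y, hy, hyw⟩)⟩)

end IsBipartition

theorem stmt6_general {V : Type*} [DecidableEq V] [Fintype V] (A : V → V → Prop) [DecidableRel A]
    (V₁ V₂ : Finset V) (a : ℕ)
    (hbip : IsBipartition A V₁ V₂) (h1 : V₁.card = a) (h2 : V₂.card = a)
    (hstrong : IsStrong A)
    (hdeg : ∀ u v, u ≠ v → ¬ A u v → ¬ A v u → 3 * a - 1 ≤ deg A u + deg A v)
    (S : Finset V) (hS : S ⊆ V₁)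
    (hlt : (outNbrs A S).card < S.card) :
    Odd a ∧ S.card = (a + 1) / 2 ∧ (outNbrs A S).card = (a - 1) / 2 := by
  set T := outNbrs A S
  have hTV₂ : T ⊆ V₂ := hbip.outNbrs_subset_right hS
  have hSa : S.card ≤ a := h1 ▸ card_le_card hS
  have hTV₂card : (V₂ \ T).card = a - T.card := by rw [card_sdiff_of_subset hTV₂, h2]
  obtain ⟨u, hu⟩ := card_pos.1 (by omega : 0 < S.card)
  have hTpos : 0 < T.card := by
    obtain ⟨w, hw⟩ := card_pos.1 (by omega : 0 < V₂.card)
    have huw : u ≠ w := fun h => disjoint_left.1 hbip.1 (hS hu) (h ▸ hw)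
    obtain ⟨y, huy⟩ := hstrong.exists_adj_of_ne huw
    exact card_pos.2 ⟨y, mem_outNbrs.2 ⟨u, hu, huy⟩⟩
  have hT_lower : 3 * a - 1 ≤ 2 * (T.card + a) :=
    le_two_mul_of_one_lt_card hdeg (fun x hx y hy => hbip.2.2.1 x (hS hx) y (hS hy)) (by omega)
      fun x hx => h2 ▸ hbip.deg_le_of_mem hS hx
  by_cases hW : 1 < (V₂ \ T).card
  · have hS_upper : 3 * a - 1 ≤ 2 * (a + (a - S.card)) :=
      le_two_mul_of_one_lt_card hdeg
        (fun x hx y hy => hbip.2.2.2 x (mem_sdiff.1 hx).1 y (mem_sdiff.1 hy).1) hW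
        fun x hx => by
          simpa only [h1, card_sdiff_of_subset hS] using
            hbip.deg_le_of_notMem_outNbrs (mem_sdiff.1 hx).1 (mem_sdiff.1 hx).2
    exact ⟨⟨T.card, by omega⟩, by omega, by omega⟩
  · have hSV₁ : S = V₁ := eq_of_subset_of_card_le hS (by omega)
    have hTa : T.card = a := by
      rw [← h2, ← hbip.outNbrs_left_eq hstrong (hS hu), ← hSV₁]
    omega

theorem stmt6 {V : Type*} [DecidableEq V] [Fintype V] (A : V → V → Prop) [DecidableRel A]
    (V₁ V₂ : Finset V) (a : ℕ) (ha : 2 ≤ a)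
    (hbip : IsBipartition A V₁ V₂) (h1 : V₁.card = a) (h2 : V₂.card = a)
    (hstrong : IsStrong A)
    (hdeg : ∀ u v, u ≠ v → ¬ A u v → ¬ A v u → 3 * a - 1 ≤ deg A u + deg A v)
    (S : Finset V) (hS : S ⊆ V₁) (hSne : S.Nonempty)
    (hlt : (outNbrs A S).card < S.card) :
    Odd a ∧ S.card = (a + 1) / 2 ∧ (outNbrs A S).card = (a - 1) / 2 :=
  stmt6_general A V₁ V₂ a hbip h1 h2 hstrong hdeg S hS hlt
end

section
/- Every digraph $H_1$ in the family $\mathcal{H}_1$ is strongly connected, satisfies $d(u)+d(v) \ge 3a - 1$ for all pairs of non-adjacent vertices $u, v$, and is not hamiltonian (indeed it has no perfect matching from $V_1$ to $V_2$, since $|N^+(S)| = |U| < |S|$). -/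
open Finset

variable {V : Type*}

/-! The out-neighbours of `S` all lie in `U`, and `|U| < |S|`: Hall's condition fails, so there is
no perfect matching from `V₁` to `V₂`, while the successor map of a hamiltonian cycle of a
bipartite digraph would be one. Each vertex is joined both ways to all of one class of the other
side and by at least `(a - 3)/2` arcs to the other class, which gives degree at least
`(3a - 1)/2`. Every vertex of `S` is a hub, reaching and reached from every vertex; the arc from
`U` to `R` is the only way out of `S ∪ U`. -/

theorem cycNext_injOn [DecidableEq V] {c : List V} (hc : c.Nodup) :
    Set.InjOn (cycNext c) {x | x ∈ c} := by
  intro x hx y hy hxy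
  have hn : 0 < c.length := List.length_pos_iff.mpr (List.ne_nil_of_mem hx)
  have hix : c.idxOf x < c.length := List.idxOf_lt_length_iff.mpr hx
  have hiy : c.idxOf y < c.length := List.idxOf_lt_length_iff.mpr hy
  simp only [cycNext, List.getD_eq_getElem _ _ (Nat.mod_lt _ hn)] at hxy
  have hsucc : c.idxOf x + 1 ≡ c.idxOf y + 1 [MOD c.length] := hc.getElem_inj_iff.mp hxy
  exact (List.idxOf_inj hx).mp ((Nat.ModEq.add_right_cancel' 1 hsucc).eq_of_lt_of_lt hix hiy)

theorem IsHamiltonian.hasPerfectMatching [DecidableEq V] {A : V → V → Prop}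
    (hA : IsHamiltonian A) {X Y : Finset V} (hXY : ∀ x ∈ X, ∀ y, A x y → y ∈ Y) :
    HasPerfectMatching A X Y := by
  obtain ⟨c, ⟨-, hnd, harc⟩, hall⟩ := hA
  refine ⟨cycNext c, (cycNext_injOn hnd).mono fun x _ => hall x, fun x hx => ?_⟩
  exact ⟨hXY x hx _ (harc x (hall x)), harc x (hall x)⟩

theorem not_hasPerfectMatching_of_card_outNbrs_lt [Fintype V] [DecidableEq V]
    {A : V → V → Prop} [DecidableRel A] {S X Y : Finset V} (hSX : S ⊆ X)
    (hS : (outNbrs A S).card < S.card) : ¬ HasPerfectMatching A X Y := by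
  rintro ⟨f, hinj, hf⟩
  have hmaps : ∀ s ∈ S, f s ∈ outNbrs A S := fun s hs =>
    mem_filter.mpr ⟨mem_univ _, s, hs, (hf s (hSX hs)).2⟩
  exact hS.not_ge (card_le_card_of_injOn f hmaps (hinj.mono (coe_subset.mpr hSX)))

section Degree

variable {A : V → V → Prop} [DecidableRel A] {X Y : Finset V} {v : V}

theorem degIn_union [DecidableEq V] (h : Disjoint X Y) :
    degIn A (X ∪ Y) v = degIn A X v + degIn A Y v := by
  simp only [degIn, filter_union, card_union_of_disjoint (disjoint_filter_filter h)]
  ring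

theorem degIn_add_degIn_le_deg [Fintype V] [DecidableEq V] (h : Disjoint X Y) :
    degIn A X v + degIn A Y v ≤ deg A v := by
  rw [← degIn_union h]
  exact add_le_add (card_le_card (filter_subset_filter _ (subset_univ _)))
    (card_le_card (filter_subset_filter _ (subset_univ _)))

theorem card_le_degIn_of_forall_arc_to (h : ∀ y ∈ X, A v y) : X.card ≤ degIn A X v := by
  rw [degIn, filter_true_of_mem h]
  omega

theorem card_le_degIn_of_forall_arc_from (h : ∀ y ∈ X, A y v) : X.card ≤ degIn A X v := by
  rw [degIn, filter_true_of_mem h]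
  omega

theorem two_mul_card_le_degIn (h : ∀ y ∈ X, A v y ∧ A y v) : 2 * X.card ≤ degIn A X v := by
  rw [degIn, filter_true_of_mem fun y hy => (h y hy).1, filter_true_of_mem fun y hy => (h y hy).2]
  omega

end Degree

namespace IsH1

variable [DecidableEq V] [Fintype V] {A : V → V → Prop} [DecidableRel A] {a : ℕ}
  {S R U W : Finset V}

open Relation

theorem mem_cases (h : IsH1 A a S R U W) (v : V) : v ∈ S ∨ v ∈ R ∨ v ∈ U ∨ v ∈ W := by
  have hv : v ∈ S ∪ R ∪ U ∪ W := h.2.2.2.2.2.1 ▸ mem_univ v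
  simpa only [mem_union, or_assoc] using hv

theorem mem_right_of_arc (h : IsH1 A a S R U W) {x y : V} (hx : x ∈ S ∪ R) (hxy : A x y) :
    y ∈ U ∪ W := by
  have hy := h.mem_cases y
  obtain ⟨-, -, -, -, -, -, -, -, -, -, hSR, -⟩ := h
  rcases hy with hy | hy | hy | hy <;> simp_all

theorem isStrong (h : IsH1 A a S R U W) : IsStrong A := by
  have hcases := h.mem_cases
  obtain ⟨-, ha, -, -, -, -, hS, hW, -, -, -, -, hRW, hUS, hWS, -,
    ⟨u₁, hu₁, r₁, hr₁, hur⟩, -⟩ := h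
  obtain ⟨s₀, hs₀⟩ := card_pos.mp (by omega : 0 < S.card)
  obtain ⟨w₀, hw₀⟩ := card_pos.mp (by omega : 0 < W.card)
  have to_hub (v : V) : ReflTransGen A v s₀ := by
    rcases hcases v with hv | hv | hv | hv
    · exact .head (hUS u₁ hu₁ v hv).2 (.single (hUS u₁ hu₁ s₀ hs₀).1)
    · exact .head (hRW v hv w₀ hw₀).1 (.single (hWS w₀ hw₀ s₀ hs₀))
    · exact .single (hUS v hv s₀ hs₀).1
    · exact .single (hWS v hv s₀ hs₀)
  have hub_r₁ : ReflTransGen A s₀ r₁ := .head (hUS u₁ hu₁ s₀ hs₀).2 (.single hur)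
  have from_hub (v : V) : ReflTransGen A s₀ v := by
    rcases hcases v with hv | hv | hv | hv
    · exact .head (hUS u₁ hu₁ s₀ hs₀).2 (.single (hUS u₁ hu₁ v hv).1)
    · exact (hub_r₁.tail (hRW r₁ hr₁ w₀ hw₀).1).tail (hRW v hv w₀ hw₀).2
    · exact .single (hUS v hv s₀ hs₀).2
    · exact hub_r₁.tail (hRW r₁ hr₁ v hv).1
  exact fun x y => (to_hub x).trans (from_hub y)

theorem three_mul_sub_one_le_two_mul_deg (h : IsH1 A a S R U W) (v : V) :
    3 * a - 1 ≤ 2 * deg A v := by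
  have hv := h.mem_cases v
  obtain ⟨⟨k, rfl⟩, -, hSR, hUW, -, -, hS, hW, hU, hR, -, -, hRW, hUS, hWS, -, -,
    hdR, hdU⟩ := h
  rcases hv with hv | hv | hv | hv
  · have := degIn_add_degIn_le_deg (A := A) (v := v) hUW
    have := two_mul_card_le_degIn fun u hu => (hUS u hu v hv).symm
    have := card_le_degIn_of_forall_arc_from fun w hw => hWS w hw v hv
    omega
  · have := degIn_add_degIn_le_deg (A := A) (v := v) hUW
    have := hdR v hv
    have := two_mul_card_le_degIn fun w hw => hRW v hv w hw
    omega
  · have := degIn_add_degIn_le_deg (A := A) (v := v) hSR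
    have := two_mul_card_le_degIn fun s hs => hUS v hv s hs
    have := hdU v hv
    omega
  · have := degIn_add_degIn_le_deg (A := A) (v := v) hSR
    have := card_le_degIn_of_forall_arc_to (hWS v hv)
    have := two_mul_card_le_degIn fun r hr => (hRW r hr v hv).symm
    omega

theorem outNbrs_subset (h : IsH1 A a S R U W) : outNbrs A S ⊆ U := by
  intro y hy
  obtain ⟨s, hs, hsy⟩ := (mem_filter.mp hy).2
  have hUW := h.mem_right_of_arc (mem_union_left R hs) hsy
  obtain ⟨-, -, -, -, -, -, -, -, -, -, -, -, -, -, -, hSW, -⟩ := h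
  exact (mem_union.mp hUW).resolve_right fun hy => hSW s hs y hy hsy

theorem not_hasPerfectMatching (h : IsH1 A a S R U W) :
    ¬ HasPerfectMatching A (S ∪ R) (U ∪ W) := by
  have hSU := h.outNbrs_subset
  obtain ⟨-, ha, -, -, -, -, hS, -, hU, -⟩ := h
  exact not_hasPerfectMatching_of_card_outNbrs_lt subset_union_left
    ((card_le_card hSU).trans_lt (by omega))

theorem not_isHamiltonian (h : IsH1 A a S R U W) : ¬ IsHamiltonian A := fun hA =>
  h.not_hasPerfectMatching (hA.hasPerfectMatching fun _ hx _ => h.mem_right_of_arc hx)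

end IsH1

theorem stmt8 {V : Type*} [DecidableEq V] [Fintype V] (A : V → V → Prop) [DecidableRel A]
    (a : ℕ) (S R U W : Finset V) (h : IsH1 A a S R U W) :
    IsStrong A ∧
    (∀ u v, u ≠ v → ¬ A u v → ¬ A v u → 3 * a - 1 ≤ deg A u + deg A v) ∧
    ¬ HasPerfectMatching A (S ∪ R) (U ∪ W) ∧
    ¬ IsHamiltonian A := by
  refine ⟨h.isStrong, fun u v _ _ _ => ?_, h.not_hasPerfectMatching, h.not_isHamiltonian⟩
  have hu := h.three_mul_sub_one_le_two_mul_deg u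
  have hv := h.three_mul_sub_one_le_two_mul_deg v
  omega
end

section
/- Let $D$ be a complete bipartite digraph minus one arc, on partite sets $A$ and $B$ with $|A| = |B| = m \ge 3$. Then for any $x \in A$ and $y \in B$, there exists a hamiltonian directed path in $D$ from $x$ to $y$. -/
open Finset

variable {V : Type*}

/-! Write the path as `x, b₁, a, b₂` followed by a hamiltonian path of the rest. Taking `a` to be
the endpoint of the deleted arc in `X` (any other vertex if that endpoint is `x`), no arc at or
after `b₂` meets that endpoint, and the rest is a balanced complete bipartite digraph, traceable
between any two vertices on opposite sides. So the deleted arc can only be one of `x b₁`, `b₁ a`,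
`a b₂`, and `|Y| ≥ 3` leaves room to choose `b₁, b₂ ≠ y` avoiding it. -/

lemma Finset.Nonempty.exists_notMem_erase_of_or {α : Type*} [DecidableEq α] {s : Finset α}
    (hs : s.Nonempty) {u w : α} (h : u ∉ s ∨ w ∉ s) :
    ∃ a ∈ s, u ∉ s.erase a ∧ w ∉ s.erase a := by
  have key : ∀ z, ∃ a ∈ s, z ∉ s.erase a := fun z => by
    by_cases hz : z ∈ s
    · exact ⟨z, hz, Finset.notMem_erase z s⟩
    · obtain ⟨a, ha⟩ := hs
      exact ⟨a, ha, fun h => hz (Finset.mem_of_mem_erase h)⟩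
  rcases h with h | h
  · obtain ⟨a, ha, hw⟩ := key w
    exact ⟨a, ha, fun h' => h (Finset.mem_of_mem_erase h'), hw⟩
  · obtain ⟨a, ha, hu⟩ := key u
    exact ⟨a, ha, hu, fun h' => h (Finset.mem_of_mem_erase h')⟩

lemma Finset.exists_two_mem_ne {α : Type*} [DecidableEq α] {s : Finset α} (hs : 3 ≤ s.card)
    (y v : α) : ∃ c ∈ s, ∃ c' ∈ s, c ≠ y ∧ c ≠ v ∧ c' ≠ y ∧ c' ≠ c := by
  have hs' : 1 < (s.erase y).card := by
    have := Finset.pred_card_le_card_erase (s := s) (a := y); omega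
  obtain ⟨c, hc, hcv⟩ := Finset.exists_mem_ne hs' v
  obtain ⟨c', hc', hc'c⟩ := Finset.exists_mem_ne hs' c
  rw [Finset.mem_erase] at hc hc'
  exact ⟨c, hc.2, c', hc'.2, hc.1, hcv, hc'.1, hc'c⟩

section HamPath

variable [DecidableEq V] {A : V → V → Prop}

def IsHamPathOn (A : V → V → Prop) (S : Finset V) (x y : V) (p : List V) : Prop :=
  p.head? = some x ∧ p.getLast? = some y ∧ p.Nodup ∧ p.IsChain A ∧ p.toFinset = S

lemma isHamPathOn_singleton (y : V) : IsHamPathOn A {y} y y [y] := by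
  simp [IsHamPathOn]

lemma IsHamPathOn.cons {S : Finset V} {a y x : V} {q : List V}
    (hq : IsHamPathOn A S a y q)
    (hx : x ∉ S) (hxa : A x a) : IsHamPathOn A (insert x S) x y (x :: q) := by
  obtain ⟨hhead, hlast, hnodup, hchain, hS⟩ := hq
  obtain ⟨t, rfl⟩ : ∃ t, q = a :: t := ⟨q.tail, (List.eq_cons_of_mem_head? hhead)⟩
  refine ⟨rfl, ?_, ?_, List.isChain_cons_cons.2 ⟨hxa, hchain⟩,
    by rw [List.toFinset_cons, hS]⟩
  · rwa [List.getLast?_cons_cons]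
  · exact List.nodup_cons.2 ⟨fun h => hx (hS ▸ List.mem_toFinset.2 h), hnodup⟩

lemma IsHamPathOn.cons_cons {X Y : Finset V} (hXY : Disjoint X Y) {a b x y : V} {q : List V}
    (hq : IsHamPathOn A (X.erase x ∪ Y.erase b) a y q) (hx : x ∈ X) (hb : b ∈ Y)
    (hxb : A x b) (hba : A b a) : IsHamPathOn A (X ∪ Y) x y (x :: b :: q) := by
  have hbX : b ∉ X := Finset.disjoint_right.1 hXY hb
  have hxY : x ∉ Y := Finset.disjoint_left.1 hXY hx
  have h₁ := hq.cons (x := b) (by simp [hbX]) hba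
  rw [← Finset.union_insert, Finset.insert_erase hb] at h₁
  have h₂ := h₁.cons (x := x) (by simp [hxY]) hxb
  rwa [← Finset.insert_union, Finset.insert_erase hx] at h₂

lemma exists_isHamPathOn_of_complete {X Y : Finset V} (hXY : Disjoint X Y)
    (hcard : X.card = Y.card) (hA : ∀ u ∈ X, ∀ v ∈ Y, A u v ∧ A v u) {x y : V}
    (hx : x ∈ X) (hy : y ∈ Y) : ∃ p, IsHamPathOn A (X ∪ Y) x y p := by
  obtain ⟨n, hn⟩ : ∃ n, X.card = n + 1 := Nat.exists_eq_add_one.2 (Finset.card_pos.2 ⟨x, hx⟩)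
  induction n generalizing X Y x y with
  | zero =>
    obtain ⟨x', rfl⟩ := Finset.card_eq_one.1 hn
    obtain ⟨y', rfl⟩ := Finset.card_eq_one.1 (hcard ▸ hn)
    rw [Finset.mem_singleton] at hx hy
    subst hx hy
    refine ⟨[x, y], ?_⟩
    rw [Finset.singleton_union]
    exact (isHamPathOn_singleton y).cons
      (Finset.notMem_singleton.2 (Finset.disjoint_singleton.1 hXY))
      (hA x (Finset.mem_singleton_self x) y (Finset.mem_singleton_self y)).1
  | succ n ih =>
    obtain ⟨a, ha, hax⟩ := Finset.exists_mem_ne (by omega : 1 < X.card) x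
    obtain ⟨b, hb, hby⟩ := Finset.exists_mem_ne (by omega : 1 < Y.card) y
    obtain ⟨q, hq⟩ := ih (X := X.erase x) (Y := Y.erase b)
      (hXY.mono (Finset.erase_subset _ _) (Finset.erase_subset _ _))
      (by rw [Finset.card_erase_of_mem hx, Finset.card_erase_of_mem hb, hcard])
      (fun u hu v hv => hA u (Finset.mem_of_mem_erase hu) v (Finset.mem_of_mem_erase hv))
      (Finset.mem_erase.2 ⟨hax, ha⟩) (Finset.mem_erase.2 ⟨hby.symm, hy⟩)
      (by rw [Finset.card_erase_of_mem hx, hn]; rfl)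
    exact ⟨_, hq.cons_cons hXY hx hb (hA x hx b hb).1 (hA a ha b hb).2⟩

lemma IsHamPathOn.isHamDipath [Fintype V] {x y : V} {p : List V}
    (hp : IsHamPathOn A Finset.univ x y p) : IsHamDipath A p :=
  ⟨hp.2.2.1, hp.2.2.2.1, fun v => List.mem_toFinset.1 (hp.2.2.2.2 ▸ Finset.mem_univ v)⟩

end HamPath

def CrossArcsExcept (A : V → V → Prop) (X Y : Finset V) (e₁ e₂ : V) : Prop :=
  ∀ u ∈ X, ∀ v ∈ Y, (A u v ↔ (u, v) ≠ (e₁, e₂)) ∧ (A v u ↔ (v, u) ≠ (e₁, e₂))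

namespace CrossArcsExcept

variable {A : V → V → Prop} {X Y : Finset V} {e₁ e₂ : V}

lemma adj_of_ne_or (h : CrossArcsExcept A X Y e₁ e₂) {u v : V} (hu : u ∈ X) (hv : v ∈ Y)
    (hne : u ≠ e₁ ∨ v ≠ e₂) : A u v :=
  (h u hu v hv).1.2 fun huv => by simp_all

lemma adj_of_ne_or' (h : CrossArcsExcept A X Y e₁ e₂) {u v : V} (hu : u ∈ X) (hv : v ∈ Y)
    (hne : v ≠ e₁ ∨ u ≠ e₂) : A v u :=
  (h u hu v hv).2.2 fun hvu => by simp_all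

lemma complete_of_notMem (h : CrossArcsExcept A X Y e₁ e₂) {X' Y' : Finset V} (hX' : X' ⊆ X)
    (hY' : Y' ⊆ Y) (he₁ : e₁ ∉ X') (he₂ : e₂ ∉ X') : ∀ u ∈ X', ∀ v ∈ Y', A u v ∧ A v u :=
  fun _ hu _ hv => ⟨h.adj_of_ne_or (hX' hu) (hY' hv) (.inl (ne_of_mem_of_not_mem hu he₁)),
    h.adj_of_ne_or' (hX' hu) (hY' hv) (.inr (ne_of_mem_of_not_mem hu he₂))⟩

lemma exists_prefix [DecidableEq V] (h : CrossArcsExcept A X Y e₁ e₂) (hXY : Disjoint X Y)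
    (he : (e₁ ∈ X ∧ e₂ ∈ Y) ∨ (e₁ ∈ Y ∧ e₂ ∈ X)) (hY : 3 ≤ Y.card) {x a : V} (hx : x ∈ X)
    (ha : a ∈ X) (hxa : x ≠ a) (y : V) :
    ∃ b₁ ∈ Y, ∃ b₂ ∈ Y, b₁ ≠ y ∧ b₂ ≠ y ∧ b₁ ≠ b₂ ∧ A x b₁ ∧ A b₁ a ∧ A a b₂ := by
  have hne : ∀ ⦃u⦄, u ∈ X → ∀ ⦃v⦄, v ∈ Y → u ≠ v := Finset.disjoint_iff_ne.1 hXY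
  rcases he with ⟨he₁, -⟩ | ⟨he₁, -⟩
  · obtain ⟨c, hc, c', hc', hcy, hce, hc'y, hc'c⟩ := Finset.exists_two_mem_ne hY y e₂
    by_cases hxe : x = e₁
    · exact ⟨c, hc, c', hc', hcy, hc'y, hc'c.symm, h.adj_of_ne_or hx hc (.inr hce),
        h.adj_of_ne_or' ha hc (.inl (hne he₁ hc).symm),
        h.adj_of_ne_or ha hc' (.inl (hxe ▸ hxa.symm))⟩
    · exact ⟨c', hc', c, hc, hc'y, hcy, hc'c, h.adj_of_ne_or hx hc' (.inl hxe),
        h.adj_of_ne_or' ha hc' (.inl (hne he₁ hc').symm), h.adj_of_ne_or ha hc (.inr hce)⟩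
  · obtain ⟨c, hc, c', hc', hcy, hce, hc'y, hc'c⟩ := Finset.exists_two_mem_ne hY y e₁
    exact ⟨c, hc, c', hc', hcy, hc'y, hc'c.symm, h.adj_of_ne_or hx hc (.inl (hne hx he₁)),
      h.adj_of_ne_or' ha hc (.inl hce), h.adj_of_ne_or ha hc' (.inl (hne ha he₁))⟩

end CrossArcsExcept

theorem stmt13_general {V : Type*} [DecidableEq V] [Fintype V] (A : V → V → Prop)
    (X Y : Finset V) (m : ℕ) (hm : 3 ≤ m)
    (hdisj : Disjoint X Y) (huniv : X ∪ Y = Finset.univ)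
    (hX : X.card = m) (hY : Y.card = m)
    (e₁ e₂ : V) (he : (e₁ ∈ X ∧ e₂ ∈ Y) ∨ (e₁ ∈ Y ∧ e₂ ∈ X))
    (hcomp : ∀ u ∈ X, ∀ v ∈ Y,
      (A u v ↔ (u, v) ≠ (e₁, e₂)) ∧ (A v u ↔ (v, u) ≠ (e₁, e₂)))
    (x : V) (hx : x ∈ X) (y : V) (hy : y ∈ Y) :
    ∃ p : List V, p.head? = some x ∧ p.getLast? = some y ∧ IsHamDipath A p := by
  have hcross : CrossArcsExcept A X Y e₁ e₂ := hcomp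
  have hX₁ : (X.erase x).Nonempty :=
    Finset.card_pos.1 (by rw [Finset.card_erase_of_mem hx]; omega)
  obtain ⟨a, ha, he₁a, he₂a⟩ := hX₁.exists_notMem_erase_of_or (u := e₁) (w := e₂) <| he.elim
    (fun h => .inr fun h' => Finset.disjoint_right.1 hdisj h.2 (Finset.mem_of_mem_erase h'))
    (fun h => .inl fun h' => Finset.disjoint_right.1 hdisj h.1 (Finset.mem_of_mem_erase h'))
  obtain ⟨hax, haX⟩ := Finset.mem_erase.1 ha
  obtain ⟨b₁, hb₁, b₂, hb₂, hb₁y, hb₂y, hb₁₂, hxb₁, hb₁a, hab₂⟩ :=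
    hcross.exists_prefix hdisj he (hY ▸ hm) hx haX (Ne.symm hax) y
  have hb₂' : b₂ ∈ Y.erase b₁ := Finset.mem_erase.2 ⟨hb₁₂.symm, hb₂⟩
  set X' := (X.erase x).erase a
  set Y' := (Y.erase b₁).erase b₂
  have hX' : X' ⊆ X := fun _ h => Finset.mem_of_mem_erase (Finset.mem_of_mem_erase h)
  have hY' : Y' ⊆ Y := fun _ h => Finset.mem_of_mem_erase (Finset.mem_of_mem_erase h)
  obtain ⟨a', ha'⟩ : X'.Nonempty := Finset.card_pos.1 (by
    rw [Finset.card_erase_of_mem ha, Finset.card_erase_of_mem hx]; omega)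
  have hcard : X'.card = Y'.card := by
    rw [Finset.card_erase_of_mem ha, Finset.card_erase_of_mem hx, Finset.card_erase_of_mem hb₂',
      Finset.card_erase_of_mem hb₁, hX, hY]
  obtain ⟨q, hq⟩ := exists_isHamPathOn_of_complete (hdisj.mono hX' hY') hcard
    (hcross.complete_of_notMem hX' hY' he₁a he₂a) ha'
    (by simp [Y', hy, hb₁y.symm, hb₂y.symm] : y ∈ Y')
  have hb₂a' : A b₂ a' :=
    hcross.adj_of_ne_or' (hX' ha') hb₂ (.inr (ne_of_mem_of_not_mem ha' he₂a))
  have hp := (hq.cons_cons (hdisj.mono (Finset.erase_subset _ _) (Finset.erase_subset _ _)) ha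
    hb₂' hab₂ hb₂a').cons_cons hdisj hx hb₁ hxb₁ hb₁a
  rw [huniv] at hp
  exact ⟨_, hp.1, hp.2.1, hp.isHamDipath⟩

theorem stmt13 {V : Type*} [DecidableEq V] [Fintype V] (A : V → V → Prop)
    (X Y : Finset V) (m : ℕ) (hm : 3 ≤ m)
    (hdisj : Disjoint X Y) (huniv : X ∪ Y = Finset.univ)
    (hX : X.card = m) (hY : Y.card = m)
    (e₁ e₂ : V) (he : (e₁ ∈ X ∧ e₂ ∈ Y) ∨ (e₁ ∈ Y ∧ e₂ ∈ X))
    (hcomp : ∀ u ∈ X, ∀ v ∈ Y,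
      (A u v ↔ (u, v) ≠ (e₁, e₂)) ∧ (A v u ↔ (v, u) ≠ (e₁, e₂)))
    (hindX : ∀ u ∈ X, ∀ v ∈ X, ¬ A u v) (hindY : ∀ u ∈ Y, ∀ v ∈ Y, ¬ A u v)
    (x : V) (hx : x ∈ X) (y : V) (hy : y ∈ Y) :
    ∃ p : List V, p.head? = some x ∧ p.getLast? = some y ∧ IsHamDipath A p :=
  stmt13_general A X Y m hm hdisj huniv hX hY e₁ e₂ he hcomp x hx y hy
end

section
/- The digraph $H_3$ (for even $a \ge 4$) is a strong balanced bipartite digraph of order $2a$ with $d(x) + d(y) \ge 3a - 2$ for all pairs of non-adjacent vertices $x, y$, but $H_3$ is not traceable (contains no hamiltonian directed path), since the maximum matching from $V_1$ to $V_2$ has size $a - 2$. -/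
open Finset

variable {V : Type*}

/-!
Along a hamiltonian path of a bipartite digraph, the arcs leaving the vertices of `V₁` (all but
possibly the last one) form a matching from `V₁` to `V₂`; for `H₃` it has at least `a - 1` arcs.
But `H₃` has no arc from `S` to `W`, so `R ∪ U` covers every matching from `V₁ = S ∪ R` to
`V₂ = U ∪ W`, which therefore has at most `|R| + |U| = a - 2` arcs.
-/

section Matching

variable {A : V → V → Prop}

theorem IsHamDipath.exists_isMatching [DecidableEq V] [Fintype V] {V₁ V₂ : Finset V}
    (hbip : IsBipartition A V₁ V₂) {p : List V} (hp : IsHamDipath A p) :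
    ∃ M, IsMatching A V₁ V₂ M ∧ V₁.card ≤ M.card + 1 := by
  obtain ⟨hnd, hch, hall⟩ := hp
  obtain ⟨-, huniv, hind₁, -⟩ := hbip
  set L := p.dropLast.zip p.tail
  have hfst : (L.map Prod.fst).Nodup := by
    rw [List.map_fst_zip (by simp)]; exact hnd.sublist (List.dropLast_sublist p)
  have hsnd : (L.map Prod.snd).Nodup := by
    rw [List.map_snd_zip (by simp)]; exact hnd.sublist (List.tail_sublist p)
  have harc : ∀ q ∈ L, A q.1 q.2 := fun _ hq =>
    (List.forall₂_iff_zip.mp (List.isChain_iff_forall₂.mp hch)).2 hq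
  set L₁ := L.filter (fun q => q.1 ∈ V₁)
  refine ⟨L₁.toFinset, ⟨fun q hq => ?_, fun q hq q' hq' hne => ?_⟩, ?_⟩
  · simp only [L₁, List.mem_toFinset, List.mem_filter, decide_eq_true_eq] at hq
    have hq₂ : q.2 ∈ V₁ ∪ V₂ := huniv ▸ Finset.mem_univ _
    refine ⟨hq.2, ?_, harc q hq.1⟩
    exact (Finset.mem_union.mp hq₂).resolve_left fun h => hind₁ _ hq.2 _ h (harc q hq.1)
  · simp only [L₁, List.mem_toFinset, List.mem_filter] at hq hq'
    exact ⟨fun h => hne (List.inj_on_of_nodup_map hfst hq.1 hq'.1 h),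
      fun h => hne (List.inj_on_of_nodup_map hsnd hq.1 hq'.1 h)⟩
  · have hV₁ : V₁.card ≤ p.countP (· ∈ V₁) := by
      rw [List.countP_eq_length_filter]
      refine (Finset.card_le_card fun v hv => ?_).trans (List.toFinset_card_le _)
      simpa [hv] using hall v
    have hlast : p.countP (· ∈ V₁) ≤ p.dropLast.countP (· ∈ V₁) + 1 := by
      conv_lhs => rw [← List.take_append_drop (p.length - 1) p]
      rw [List.countP_append, List.dropLast_eq_take]
      have := (List.countP_le_length (p := (· ∈ V₁)) (l := p.drop (p.length - 1)))
      simp only [List.length_drop] at this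
      omega
    have hL₁ : L₁.toFinset.card = p.dropLast.countP (· ∈ V₁) := by
      rw [List.toFinset_card_of_nodup ((hfst.of_map _).filter _), ← List.countP_eq_length_filter,
        ← List.map_fst_zip (l₁ := p.dropLast) (l₂ := p.tail) (by simp), List.countP_map]
      rfl
    omega

theorem card_add_card_le_deg [Fintype V] [DecidableRel A] {X Y : Finset V} {v : V}
    (hout : ∀ y ∈ X, A v y) (hin : ∀ y ∈ Y, A y v) : X.card + Y.card ≤ deg A v :=
  Nat.add_le_add (Finset.card_le_card fun y hy => by simpa using hout y hy)
    (Finset.card_le_card fun y hy => by simpa using hin y hy)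

theorem IsMatching.card_le_card_add_card [DecidableEq V] {V₁ V₂ X Y : Finset V}
    {M : Finset (V × V)} (hM : IsMatching A V₁ V₂ M) (hcover : ∀ q ∈ M, q.1 ∈ X ∨ q.2 ∈ Y) :
    M.card ≤ X.card + Y.card := by
  rw [← Finset.card_filter_add_card_filter_not (fun q : V × V => q.1 ∈ X)]
  refine Nat.add_le_add (Finset.card_le_card_of_injOn Prod.fst (fun q hq => ?_) ?_)
    (Finset.card_le_card_of_injOn Prod.snd (fun q hq => ?_) ?_)
  · exact (Finset.mem_filter.mp hq).2
  · intro q hq q' hq' h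
    by_contra hne
    exact (hM.2 q (Finset.mem_filter.mp hq).1 q' (Finset.mem_filter.mp hq').1 hne).1 h
  · obtain ⟨hqM, hqX⟩ := Finset.mem_filter.mp hq
    exact (hcover q hqM).resolve_left hqX
  · intro q hq q' hq' h
    by_contra hne
    exact (hM.2 q (Finset.mem_filter.mp hq).1 q' (Finset.mem_filter.mp hq').1 hne).2 h

end Matching

namespace IsH3

variable [DecidableEq V] [Fintype V] {A : V → V → Prop} [DecidableRel A] {a : ℕ}
  {S R U W : Finset V}

theorem mem_cases (h : IsH3 A a S R U W) (v : V) : v ∈ S ∨ v ∈ R ∨ v ∈ U ∨ v ∈ W := by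
  obtain ⟨-, -, -, -, -, hunion, -⟩ := h
  have hv : v ∈ S ∪ R ∪ U ∪ W := hunion ▸ Finset.mem_univ v
  simp only [Finset.mem_union] at hv
  tauto

theorem isBipartition (h : IsH3 A a S R U W) : IsBipartition A (S ∪ R) (U ∪ W) := by
  obtain ⟨-, -, -, -, hdisj, hunion, -, -, -, -, hind₁, hind₂, -⟩ := h
  exact ⟨hdisj, by rw [← Finset.union_assoc, hunion], hind₁, hind₂⟩

theorem card_union_left (h : IsH3 A a S R U W) : (S ∪ R).card = a := by
  obtain ⟨⟨b, rfl⟩, ha, hSR, -, -, -, hS, -, -, hR, -⟩ := h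
  rw [Finset.card_union_of_disjoint hSR]
  omega

theorem card_union_right (h : IsH3 A a S R U W) : (U ∪ W).card = a := by
  obtain ⟨⟨b, rfl⟩, ha, -, hUW, -, -, -, hW, hU, -⟩ := h
  rw [Finset.card_union_of_disjoint hUW]
  omega

/-- Every vertex is joined in both directions to some `u₀ ∈ U` or some `r₀ ∈ R`, and `u₀ ⇄ r₀`. -/
theorem isStrong (h : IsH3 A a S R U W) : IsStrong A := by
  have hcases := h.mem_cases
  obtain ⟨-, ha, -, -, -, -, -, -, hUcard, hRcard, -, -, hR, hU, -⟩ := h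
  obtain ⟨r₀, hr₀⟩ : R.Nonempty := Finset.card_pos.mp (by omega)
  obtain ⟨u₀, hu₀⟩ : U.Nonempty := Finset.card_pos.mp (by omega)
  have hmutual : ∀ v, (A v u₀ ∧ A u₀ v) ∨ (A r₀ v ∧ A v r₀) := by
    intro v
    rcases hcases v with hv | hv | hv | hv
    · exact .inl (hU u₀ hu₀ v (Finset.mem_union_left _ hv)).symm
    · exact .inl (hU u₀ hu₀ v (Finset.mem_union_right _ hv)).symm
    · exact .inr (hR r₀ hr₀ v (Finset.mem_union_left _ hv))
    · exact .inr (hR r₀ hr₀ v (Finset.mem_union_right _ hv))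
  have hr₀u₀ := hR r₀ hr₀ u₀ (Finset.mem_union_left _ hu₀)
  intro x y
  have hto : Relation.ReflTransGen A x u₀ := by
    rcases hmutual x with hx | hx
    exacts [.single hx.1, .head hx.2 (.single hr₀u₀.1)]
  have hfrom : Relation.ReflTransGen A u₀ y := by
    rcases hmutual y with hy | hy
    exacts [.single hy.2, .head hr₀u₀.2 (.single hy.1)]
  exact hto.trans hfrom

theorem three_mul_sub_two_le_two_mul_deg (h : IsH3 A a S R U W) (v : V) :
    3 * a - 2 ≤ 2 * deg A v := by
  have hcases := h.mem_cases v
  have hV₁ := h.card_union_left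
  have hV₂ := h.card_union_right
  obtain ⟨⟨b, rfl⟩, ha, -, -, -, -, hScard, hWcard, hUcard, hRcard, -, -, hR, hU, hWS, -⟩ := h
  rcases hcases with hv | hv | hv | hv
  · have := card_add_card_le_deg (X := U) (Y := U ∪ W) (v := v)
      (fun u hu => (hU u hu v (Finset.mem_union_left _ hv)).2)
      (fun y hy => (Finset.mem_union.mp hy).elim
        (fun hy => (hU y hy v (Finset.mem_union_left _ hv)).1) (fun hy => hWS y hy v hv))
    omega
  · have := card_add_card_le_deg (fun y hy => (hR v hv y hy).1) (fun y hy => (hR v hv y hy).2)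
    omega
  · have := card_add_card_le_deg (fun y hy => (hU v hv y hy).1) (fun y hy => (hU v hv y hy).2)
    omega
  · have := card_add_card_le_deg (X := S ∪ R) (Y := R) (v := v)
      (fun y hy => (Finset.mem_union.mp hy).elim (fun hy => hWS v hv y hy)
        (fun hy => (hR y hy v (Finset.mem_union_right _ hv)).2))
      (fun r hr => (hR r hr v (Finset.mem_union_right _ hv)).1)
    omega

theorem card_le_of_isMatching (h : IsH3 A a S R U W) {M : Finset (V × V)}
    (hM : IsMatching A (S ∪ R) (U ∪ W) M) : M.card ≤ a - 2 := by
  obtain ⟨⟨b, rfl⟩, ha, -, -, -, -, -, -, hUcard, hRcard, -, -, -, -, -, hSW⟩ := h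
  have hcover : ∀ q ∈ M, q.1 ∈ R ∨ q.2 ∈ U := by
    intro q hq
    obtain ⟨h₁, h₂, harc⟩ := hM.1 q hq
    rcases Finset.mem_union.mp h₁ with hs | hr
    · exact .inr ((Finset.mem_union.mp h₂).resolve_right fun hw => hSW _ hs _ hw harc)
    · exact .inl hr
  have := hM.card_le_card_add_card hcover
  omega

end IsH3

theorem stmt16 {V : Type*} [DecidableEq V] [Fintype V] (A : V → V → Prop) [DecidableRel A]
    (a : ℕ) (S R U W : Finset V) (h : IsH3 A a S R U W) :
    IsStrong A ∧
    (∀ u v, u ≠ v → ¬ A u v → ¬ A v u → 3 * a - 2 ≤ deg A u + deg A v) ∧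
    (∀ M : Finset (V × V), IsMatching A (S ∪ R) (U ∪ W) M → M.card ≤ a - 2) ∧
    ¬ IsTraceable A := by
  refine ⟨h.isStrong, fun u v _ _ _ => ?_, fun M => h.card_le_of_isMatching, ?_⟩
  · have := h.three_mul_sub_two_le_two_mul_deg u
    have := h.three_mul_sub_two_le_two_mul_deg v
    omega
  · rintro ⟨p, hp⟩
    obtain ⟨M, hM, hcard⟩ := hp.exists_isMatching h.isBipartition
    have := h.card_le_of_isMatching hM
    have := h.card_union_left
    have ha : 4 ≤ a := h.2.1
    omega
end
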